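/- Let N be a positive integer and w = α₀α₁…α_{l−1} ∈ Ā a word of length l ≥ 1. Then there exists a unique α ∈ ℤ/Nℤ such that the word α₁…α_{l−1}α (the immediate successor obtained by deleting the first letter and appending α) lies in Ā, and there exists a unique β ∈ ℤ/Nℤ such that the word βα₀…α_{l−2} (the immediate predecessor obtained by deleting the last letter and prepending β) lies in Ā. -/

import Mathlib

/-- The monoid homomorphism π sending a word α₁…α_l over ℤ/Nℤ to the matrix product
[[0,1],[−1,α₁]] ⋯ [[0,1],[−1,α_l]]. -/
def piWordN (N : ℕ) (w : List (ZMod N)) : Matrix (Fin 2) (Fin 2) (ZMod N) :=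
  (w.map fun α => !![0, 1; -1, α]).prod

/-- Ā : the words whose image under π has (2,2)-entry equal to 0. -/
def Abar (N : ℕ) : Set (List (ZMod N)) :=
  {w | piWordN N w 1 1 = 0}

/-!
Write `P = π(w)`, an `SL₂` matrix. Appending a letter `α` to `w` changes the (2,2)-entry to
`P₁₀ + P₁₁ α`, and prepending `α` changes it to `-P₀₁ + P₁₁ α`. Both are affine in `α` with
slope `P₁₁`, so it suffices to see that `P₁₁` is a unit for the relevant `P`. If the (2,2)-entry
of `π(a :: t)` (resp. `π(d ++ [b])`) vanishes, then `P = π(t)` (resp. `π(d)`) has `P₁₁ ∣ P₀₁`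
(resp. `P₁₁ ∣ P₁₀`), and then `P₁₁` divides `det P = 1`.
-/

section CommRing

variable {R : Type*} [CommRing R]

theorem Matrix.isUnit_apply_one_one_of_det_eq_one {P : Matrix (Fin 2) (Fin 2) R}
    (hP : P.det = 1) (h : P 1 1 ∣ P 0 1 * P 1 0) : IsUnit (P 1 1) := by
  refine isUnit_of_dvd_one ?_
  rw [← hP, Matrix.det_fin_two]
  exact dvd_sub (dvd_mul_left _ _) h

theorem Matrix.mul_of_apply_one_one (P : Matrix (Fin 2) (Fin 2) R) (α : R) :
    (P * !![0, 1; -1, α]) 1 1 = P 1 0 + P 1 1 * α := by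
  simp [Matrix.mul_apply, Fin.sum_univ_two]

theorem Matrix.of_mul_apply_one_one (P : Matrix (Fin 2) (Fin 2) R) (α : R) :
    (!![0, 1; -1, α] * P) 1 1 = -P 0 1 + P 1 1 * α := by
  simp [Matrix.mul_apply, Fin.sum_univ_two, mul_comm]

theorem existsUnique_add_mul_eq_zero {u : R} (hu : IsUnit u) (c : R) :
    ∃! x : R, c + u * x = 0 := by
  have hinv := hu.mul_val_inv
  refine ⟨-(↑hu.unit⁻¹ * c), by linear_combination -c * hinv, fun y hy => hu.mul_left_cancel ?_⟩
  linear_combination hy + c * hinv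

end CommRing

theorem piWordN_cons (N : ℕ) (a : ZMod N) (t : List (ZMod N)) :
    piWordN N (a :: t) = !![0, 1; -1, a] * piWordN N t := by
  simp [piWordN]

theorem piWordN_concat (N : ℕ) (t : List (ZMod N)) (a : ZMod N) :
    piWordN N (t ++ [a]) = piWordN N t * !![0, 1; -1, a] := by
  simp [piWordN]

theorem det_piWordN (N : ℕ) (w : List (ZMod N)) : (piWordN N w).det = 1 := by
  induction w with
  | nil => simp [piWordN]
  | cons a t ih =>
    rw [piWordN_cons, Matrix.det_mul, ih, mul_one, Matrix.det_fin_two_of]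
    ring

theorem cons_mem_Abar_iff (N : ℕ) (α : ZMod N) (t : List (ZMod N)) :
    α :: t ∈ Abar N ↔ -piWordN N t 0 1 + piWordN N t 1 1 * α = 0 := by
  rw [Abar, Set.mem_ofPred_eq, piWordN_cons, Matrix.of_mul_apply_one_one]

theorem concat_mem_Abar_iff (N : ℕ) (t : List (ZMod N)) (α : ZMod N) :
    t ++ [α] ∈ Abar N ↔ piWordN N t 1 0 + piWordN N t 1 1 * α = 0 := by
  rw [Abar, Set.mem_ofPred_eq, piWordN_concat, Matrix.mul_of_apply_one_one]

theorem stmt17_general (N : ℕ) (w : List (ZMod N)) (hne : w ≠ [])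
    (hw : w ∈ Abar N) :
    (∃! α : ZMod N, w.tail ++ [α] ∈ Abar N) ∧
    (∃! β : ZMod N, β :: w.dropLast ∈ Abar N) := by
  constructor
  · obtain ⟨a, t, rfl⟩ := List.exists_cons_of_ne_nil hne
    rw [cons_mem_Abar_iff] at hw
    have hu : IsUnit (piWordN N t 1 1) :=
      Matrix.isUnit_apply_one_one_of_det_eq_one (det_piWordN N t)
        (Dvd.dvd.mul_right ⟨a, by linear_combination -hw⟩ _)
    simpa only [List.tail_cons, concat_mem_Abar_iff] using existsUnique_add_mul_eq_zero hu _
  · obtain ⟨d, b, rfl⟩ : ∃ d b, w = d ++ [b] :=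
      ⟨_, _, (List.dropLast_append_getLast hne).symm⟩
    rw [concat_mem_Abar_iff] at hw
    have hu : IsUnit (piWordN N d 1 1) :=
      Matrix.isUnit_apply_one_one_of_det_eq_one (det_piWordN N d)
        (Dvd.dvd.mul_left ⟨-b, by linear_combination hw⟩ _)
    simpa only [List.dropLast_concat, cons_mem_Abar_iff] using existsUnique_add_mul_eq_zero hu _

theorem stmt17 (N : ℕ) (hN : 0 < N) (w : List (ZMod N)) (hne : w ≠ [])
    (hw : w ∈ Abar N) :
    (∃! α : ZMod N, w.tail ++ [α] ∈ Abar N) ∧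
    (∃! β : ZMod N, β :: w.dropLast ∈ Abar N) :=
  stmt17_general N w hne hw
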